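/- For all integers n, m ≥ 1, the domination polynomial of the n×m rook graph satisfies D_{R_{n,m}}(x) = (1+x)^{nm} − Σ_{r=0}^{n−1} Σ_{c=0}^{m−1} C(n,r) C(m,c) Σ_{k=0}^{c} (−1)^{c−k} C(c,k) ((1+x)^k − 1)^r as an identity in the polynomial ring ℤ[x]. -/

import Mathlib

open Finset Polynomial

/-- The `n × m` rook graph: vertices are squares `(a,b)`; two distinct squares are
adjacent iff they share a row or a column. -/
def rookGraph (n m : ℕ) : SimpleGraph (Fin n × Fin m) where
  Adj v w := v ≠ w ∧ (v.1 = w.1 ∨ v.2 = w.2)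
  symm := by
    refine ⟨?_⟩
    rintro v w ⟨h1, h2⟩
    exact ⟨h1.symm, h2.imp Eq.symm Eq.symm⟩
  loopless := by
    refine ⟨?_⟩
    rintro v ⟨h1, _⟩
    exact h1 rfl

/-- `S` is a dominating set of the `n × m` rook graph. -/
def IsDomSet (n m : ℕ) (S : Finset (Fin n × Fin m)) : Prop :=
  ∀ v, v ∈ S ∨ ∃ u ∈ S, (rookGraph n m).Adj u v

/-- `domCount n m k` is the number of dominating sets of cardinality `k`
of the `n × m` rook graph. -/
noncomputable def domCount (n m k : ℕ) : ℕ :=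
  Set.ncard {S : Finset (Fin n × Fin m) | S.card = k ∧ IsDomSet n m S}

/-- `ECount n m k` is the number of `k`-element subsets of `{1,…,n} × {1,…,m}`
that meet every row and every column. -/
noncomputable def ECount (n m k : ℕ) : ℕ :=
  Set.ncard {T : Finset (Fin n × Fin m) | T.card = k ∧
    (∀ r : Fin n, ∃ c : Fin m, (r, c) ∈ T) ∧ (∀ c : Fin m, ∃ r : Fin n, (r, c) ∈ T)}

/-- The domination polynomial of the `n × m` rook graph, as a polynomial over `ℤ`. -/
noncomputable def domPoly (n m : ℕ) : Polynomial ℤ :=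
  ∑ k ∈ Finset.range (n * m + 1), Polynomial.C (domCount n m k : ℤ) * Polynomial.X ^ k

/-!
A set of squares dominates the rook graph iff it meets every row or every column. Encode a set
of squares by the function sending each row to the set of its occupied columns. For a set of
rows `R`, the sets with row support exactly `R` and column support inside `C` weigh
`((1 + x) ^ #C - 1) ^ #R`, since every row of `R` picks a nonempty subset of `C`. Möbius inversion
over the column sets gives the weight for column support exactly `C`; summing over proper `R` and
`C`, which enter only through their sizes, yields the weight of the non-dominating sets, and the
dominating sets account for the rest of `(1 + x) ^ (n * m) = ∑ S, x ^ #S`.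
-/

section MoebiusInversion

variable {ι β G : Type*} [DecidableEq β]

theorem Finset.sum_powerset_filter_superset_neg_one_pow (s C : Finset β) :
    ∑ K ∈ C.powerset with s ⊆ K, (-1 : ℤ) ^ (#C - #K) = if s = C then 1 else 0 := by
  by_cases hsC : s ⊆ C
  · have hcompl : ∑ K ∈ C.powerset with s ⊆ K, (-1 : ℤ) ^ (#C - #K)
        = ∑ T ∈ (C \ s).powerset, (-1 : ℤ) ^ #T := by
      refine sum_nbij' (C \ ·) (C \ ·) ?_ ?_ ?_ ?_ ?_ <;> intro K hK <;>
        simp only [mem_filter, mem_powerset] at hK ⊢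
      · exact sdiff_subset_sdiff le_rfl hK.2
      · exact ⟨sdiff_subset, subset_sdiff.2 ⟨hsC, disjoint_sdiff.mono_right hK⟩⟩
      · exact sdiff_sdiff_eq_self hK.1
      · exact sdiff_sdiff_eq_self (hK.trans sdiff_subset)
      · rw [card_sdiff_of_subset hK.1]
    have hCs : C ⊆ s ↔ s = C := ⟨fun h => subset_antisymm hsC h, fun h => h.ge⟩
    simp only [hcompl, sum_powerset_neg_one_pow_card, sdiff_eq_empty_iff_subset, hCs]
  · rw [filter_false_of_mem fun K hK hsK => hsC (hsK.trans (mem_powerset.1 hK)), sum_empty,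
      if_neg fun h => hsC h.le]

variable [AddCommGroup G]

theorem Finset.sum_filter_eq_eq_sum_powerset (s : Finset ι) (supp : ι → Finset β) (w : ι → G)
    (C : Finset β) :
    ∑ i ∈ s with supp i = C, w i =
      ∑ K ∈ C.powerset, (-1 : ℤ) ^ (#C - #K) • ∑ i ∈ s with supp i ⊆ K, w i := by
  simp_rw [sum_filter, smul_sum]
  rw [sum_comm]
  refine sum_congr rfl fun i _ => ?_
  simp_rw [smul_ite, smul_zero, ← sum_filter, ← sum_smul,
    sum_powerset_filter_superset_neg_one_pow, ite_smul, one_smul, zero_smul]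

end MoebiusInversion

section PowersetSums

variable {β A : Type*} [CommRing A] (x : A)

theorem Finset.sum_powerset_pow_card (C : Finset β) : ∑ T ∈ C.powerset, x ^ #T = (1 + x) ^ #C := by
  simpa [add_comm] using sum_pow_mul_eq_add_pow x 1 C

theorem Finset.sum_powerset_filter_nonempty_pow_card (C : Finset β) :
    ∑ T ∈ C.powerset with T.Nonempty, x ^ #T = (1 + x) ^ #C - 1 := by
  have hempty : {T ∈ C.powerset | ¬T.Nonempty} = {∅} := by
    ext T
    simp only [mem_filter, mem_powerset, not_nonempty_iff_eq_empty, mem_singleton]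
    exact ⟨And.right, fun hT => ⟨hT ▸ empty_subset C, hT⟩⟩
  rw [← sum_powerset_pow_card, ← sum_filter_add_sum_filter_not C.powerset (·.Nonempty), hempty]
  simp

end PowersetSums

section Supports

variable {α β : Type*} [Fintype α] [Fintype β] [DecidableEq α] [DecidableEq β]

def rowSupport (g : α → Finset β) : Finset α := {a | (g a).Nonempty}

def colSupport (g : α → Finset β) : Finset β := univ.biUnion g

variable {A : Type*} [CommRing A] (x : A)

theorem sum_pow_card_rowSupport_eq_colSupport_subset (R : Finset α) (C : Finset β) :
    ∑ g with rowSupport g = R ∧ colSupport g ⊆ C, x ^ ∑ a, #(g a) = ((1 + x) ^ #C - 1) ^ #R := by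
  have hpi : ({g | rowSupport g = R ∧ colSupport g ⊆ C} : Finset (α → Finset β)) =
      Fintype.piFinset fun a => if a ∈ R then {T ∈ C.powerset | T.Nonempty} else {∅} := by
    ext g
    simp only [rowSupport, colSupport, mem_filter, mem_univ, true_and, Fintype.mem_piFinset,
      biUnion_subset_iff_forall_subset, Finset.ext_iff]
    constructor
    · rintro ⟨hR, hC⟩ a
      split_ifs with ha
      · simpa [hC a] using (hR a).2 ha
      · simpa [not_nonempty_iff_eq_empty] using mt (hR a).1 ha
    · intro h
      refine ⟨fun a => ?_, fun a => ?_⟩ <;> have ha := h a <;> split_ifs at ha with haR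
      all_goals simp_all [mem_powerset]
  have hrow (a : α) : ∑ T ∈ (if a ∈ R then {T ∈ C.powerset | T.Nonempty} else {∅}), x ^ #T =
      if a ∈ R then (1 + x) ^ #C - 1 else 1 := by
    split_ifs
    · exact sum_powerset_filter_nonempty_pow_card x C
    · simp
  simp_rw [hpi, ← prod_pow_eq_pow_sum, ← prod_univ_sum _ fun _ T => x ^ #T, hrow,
    Fintype.prod_ite_mem, prod_const]

/-- The weighted count of subsets of an `r × c` board meeting every row and every column. -/
def coveringSum (r c : ℕ) : A :=
  ∑ k ∈ range (c + 1), (-1 : A) ^ (c - k) * (c.choose k : A) * ((1 + x) ^ k - 1) ^ r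

theorem sum_pow_card_rowSupport_eq_colSupport_eq (R : Finset α) (C : Finset β) :
    ∑ g with rowSupport g = R ∧ colSupport g = C, x ^ ∑ a, #(g a) = coveringSum x #R #C := by
  have hmoebius := sum_filter_eq_eq_sum_powerset {g : α → Finset β | rowSupport g = R} colSupport
    (fun g => x ^ ∑ a, #(g a)) C
  simp only [filter_filter] at hmoebius
  rw [hmoebius, coveringSum]
  simp_rw [sum_pow_card_rowSupport_eq_colSupport_subset]
  rw [sum_powerset_apply_card (fun k => (-1 : ℤ) ^ (#C - k) • ((1 + x) ^ k - 1) ^ #R)]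
  refine sum_congr rfl fun k _ => ?_
  rw [nsmul_eq_mul, zsmul_eq_mul]
  push_cast
  ring

omit [Fintype β] [DecidableEq β] in
theorem sum_erase_univ_apply_card (F : ℕ → A) :
    ∑ S ∈ (univ : Finset (Finset α)).erase univ, F #S =
      ∑ k ∈ range (Fintype.card α), (Fintype.card α).choose k • F k := by
  rw [sum_erase_eq_sub (mem_univ _), ← powerset_univ, sum_powerset_apply_card, card_univ,
    sum_range_succ, Nat.choose_self, one_smul, add_sub_cancel_right]

theorem sum_pow_card_rowSupport_ne_colSupport_ne :
    ∑ g : α → Finset β with rowSupport g ≠ univ ∧ colSupport g ≠ univ, x ^ ∑ a, #(g a) =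
      ∑ r ∈ range (Fintype.card α), ∑ c ∈ range (Fintype.card β),
        ((Fintype.card α).choose r * (Fintype.card β).choose c : A) * coveringSum x r c := by
  rw [← sum_fiberwise_of_maps_to (g := fun g => (rowSupport g, colSupport g))
    (t := (univ.erase univ) ×ˢ (univ.erase univ)) (by simp), sum_product]
  calc _ = ∑ R ∈ univ.erase univ, ∑ C ∈ univ.erase univ, coveringSum x #R #C := by
        refine sum_congr rfl fun R hR => sum_congr rfl fun C hC => ?_
        rw [filter_filter, ← sum_pow_card_rowSupport_eq_colSupport_eq]
        refine sum_congr (filter_congr fun g _ => ?_) fun _ _ => rfl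
        rw [mem_erase] at hR hC
        constructor
        · rintro ⟨-, h⟩
          exact Prod.ext_iff.1 h
        · rintro ⟨rfl, rfl⟩
          exact ⟨⟨hR.1, hC.1⟩, rfl⟩
    _ = _ := by
        simp_rw [sum_erase_univ_apply_card (coveringSum x _)]
        rw [sum_erase_univ_apply_card fun r =>
          ∑ c ∈ range (Fintype.card β), (Fintype.card β).choose c • coveringSum x r c]
        simp_rw [smul_sum, smul_smul, nsmul_eq_mul, Nat.cast_mul]

end Supports

section Grid

variable {α β : Type*} [Fintype α] [Fintype β] [DecidableEq α] [DecidableEq β]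

def finsetProdEquivFun : Finset (α × β) ≃ (α → Finset β) where
  toFun T a := {b | (a, b) ∈ T}
  invFun g := {p | p.2 ∈ g p.1}
  left_inv T := by ext; simp
  right_inv g := by ext; simp

theorem card_eq_sum_card_finsetProdEquivFun (T : Finset (α × β)) :
    #T = ∑ a, #(finsetProdEquivFun T a) := by
  simp only [finsetProdEquivFun, Equiv.coe_fn_mk, card_filter]
  rw [← Fintype.sum_prod_type', ← card_filter, filter_mem_eq_inter, univ_inter]

theorem rowSupport_finsetProdEquivFun_eq_univ_iff (T : Finset (α × β)) :
    rowSupport (finsetProdEquivFun T) = univ ↔ ∀ a, ∃ b, (a, b) ∈ T := by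
  simp [rowSupport, finsetProdEquivFun, eq_univ_iff_forall, Finset.Nonempty]

theorem colSupport_finsetProdEquivFun_eq_univ_iff (T : Finset (α × β)) :
    colSupport (finsetProdEquivFun T) = univ ↔ ∀ b, ∃ a, (a, b) ∈ T := by
  simp [colSupport, finsetProdEquivFun, eq_univ_iff_forall]

end Grid

theorem isDomSet_iff {n m : ℕ} (S : Finset (Fin n × Fin m)) :
    IsDomSet n m S ↔ (∀ a, ∃ b, (a, b) ∈ S) ∨ (∀ b, ∃ a, (a, b) ∈ S) := by
  constructor
  · intro hS
    by_contra! h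
    obtain ⟨⟨a, ha⟩, b, hb⟩ := h
    rcases hS (a, b) with hab | ⟨⟨c, d⟩, hcd, -, hrow | hcol⟩
    · exact ha b hab
    · obtain rfl : c = a := hrow
      exact ha d hcd
    · obtain rfl : d = b := hcol
      exact hb c hcd
  · rintro (hrows | hcols) ⟨a, b⟩
    · obtain ⟨d, hd⟩ := hrows a
      by_cases hdb : d = b
      · exact .inl (hdb ▸ hd)
      · exact .inr ⟨(a, d), hd, by simp [rookGraph, hdb]⟩
    · obtain ⟨c, hc⟩ := hcols b
      by_cases hca : c = a
      · exact .inl (hca ▸ hc)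
      · exact .inr ⟨(c, b), hc, by simp [rookGraph, hca]⟩

theorem domPoly_eq_sum (n m : ℕ) [DecidablePred (IsDomSet n m)] :
    domPoly n m = ∑ S : Finset (Fin n × Fin m) with IsDomSet n m S, X ^ #S := by
  have hcount (k : ℕ) : domCount n m k = #{S | IsDomSet n m S ∧ #S = k} := by
    rw [domCount, ← Set.ncard_coe_finset]
    congr
    ext
    simp [and_comm]
  have hmaps : ∀ S ∈ ({S | IsDomSet n m S} : Finset (Finset (Fin n × Fin m))),
      #S ∈ range (n * m + 1) := fun S _ => by
    simpa [Nat.lt_succ_iff] using card_le_univ S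
  rw [domPoly, ← sum_fiberwise_of_maps_to hmaps]
  refine sum_congr rfl fun k _ => ?_
  rw [sum_congr rfl fun S hS => by rw [(mem_filter.1 hS).2], sum_const, filter_filter, ← hcount,
    nsmul_eq_mul, map_natCast]

theorem sum_filter_not_isDomSet_pow_card {A : Type*} [CommRing A] (x : A) (n m : ℕ)
    [DecidablePred (IsDomSet n m)] :
    ∑ S : Finset (Fin n × Fin m) with ¬IsDomSet n m S, x ^ #S =
      ∑ r ∈ range n, ∑ c ∈ range m, (n.choose r * m.choose c : A) * coveringSum x r c := by
  have hnondom := sum_pow_card_rowSupport_ne_colSupport_ne (α := Fin n) (β := Fin m) x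
  simp only [Fintype.card_fin] at hnondom
  rw [← hnondom]
  refine sum_equiv finsetProdEquivFun (fun S => ?_) (fun S _ => ?_)
  · simp [isDomSet_iff, rowSupport_finsetProdEquivFun_eq_univ_iff,
      colSupport_finsetProdEquivFun_eq_univ_iff]
  · rw [card_eq_sum_card_finsetProdEquivFun]

theorem rook_domination_polynomial_form10_general (n m : ℕ) :
    domPoly n m =
      (1 + Polynomial.X) ^ (n * m) -
        ∑ r ∈ Finset.range n, ∑ c ∈ Finset.range m,
          Polynomial.C (n.choose r : ℤ) * Polynomial.C (m.choose c : ℤ) *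
            ∑ k ∈ Finset.range (c + 1),
              (-1 : Polynomial ℤ) ^ (c - k) * Polynomial.C (c.choose k : ℤ) *
                ((1 + Polynomial.X) ^ k - 1) ^ r := by
  classical
  have hall : (1 + X : ℤ[X]) ^ (n * m) = ∑ S : Finset (Fin n × Fin m), X ^ #S := by
    rw [← powerset_univ, sum_powerset_pow_card, card_univ, Fintype.card_prod, Fintype.card_fin,
      Fintype.card_fin]
  have hnondom := sum_filter_not_isDomSet_pow_card (X : ℤ[X]) n m
  simp only [coveringSum, map_natCast] at hnondom ⊢
  rw [← hnondom, domPoly_eq_sum, hall, eq_sub_iff_add_eq, sum_filter_add_sum_filter_not]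

/-- Intermediate form (eq. (10) in the paper) of the domination polynomial. -/
theorem rook_domination_polynomial_form10 (n m : ℕ) (hn : 1 ≤ n) (hm : 1 ≤ m) :
    domPoly n m =
      (1 + Polynomial.X) ^ (n * m) -
        ∑ r ∈ Finset.range n, ∑ c ∈ Finset.range m,
          Polynomial.C (n.choose r : ℤ) * Polynomial.C (m.choose c : ℤ) *
            ∑ k ∈ Finset.range (c + 1),
              (-1 : Polynomial ℤ) ^ (c - k) * Polynomial.C (c.choose k : ℤ) *
                ((1 + Polynomial.X) ^ k - 1) ^ r :=
  rook_domination_polynomial_form10_general n m
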